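/- Let T be a positive natural number. For each i ∈ {1, …, T}, let α_i be a finite nonempty type and let p_i, q_i : α_i → ℝ be probability mass functions with p_i a > 0 for every a, and suppose χ²(q_i‖p_i) ≤ 1 for every i. Let η ∈ [0, 1/2] and set m_i = (1−η)·p_i + η·q_i. Then the KL divergence between the product distributions satisfies KL(⊗_{i=1}^T m_i ‖ ⊗_{i=1}^T p_i) = Σ_{i=1}^T KL(m_i‖p_i) ≤ T·η² / (2·(1−η)). -/

import Mathlib

/-!
Each single-token divergence is controlled through the pointwise bound
`klFun t ≤ (t - 1)² / (2c)` for `t ≥ c`, where `c ∈ (0, 1]`: the function `klFun` vanishes to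
second order at `1` and its second derivative `1 / t` is at most `1 / c` there. The likelihood
ratio of the mixture `(1 - η) p + η q` against `p` is at least `1 - η`, so with `c = 1 - η` the
bound sums to `KL(m‖p) ≤ η² χ²(q‖p) / (2(1 - η))`. Since the log-likelihood ratio of a product
is the sum of the coordinate ratios and the other coordinates integrate to one, the product
divergence is the sum of the coordinate divergences.
-/

open Finset Real InformationTheory

noncomputable section

def mixture {α : Type*} (η : ℝ) (p q : α → ℝ) : α → ℝ := fun a => (1 - η) * p a + η * q a

def piProd {ι : Type*} [Fintype ι] {α : ι → Type*} (f : ∀ i, α i → ℝ) : (∀ i, α i) → ℝ :=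
  fun x => ∏ i, f i (x i)

section Discrete

variable {α : Type*} [Fintype α]

def discreteKL (r p : α → ℝ) : ℝ := ∑ a, r a * log (r a / p a)

def discreteChiSq (q p : α → ℝ) : ℝ := ∑ a, (q a - p a) ^ 2 / p a

lemma sum_mixture {p q : α → ℝ} (hp : ∑ a, p a = 1) (hq : ∑ a, q a = 1) (η : ℝ) :
    ∑ a, mixture η p q a = 1 := by
  simp only [mixture, sum_add_distrib, ← mul_sum, hp, hq]
  ring

end Discrete

lemma klFun_le_sq_div {c t : ℝ} (hc0 : 0 < c) (hc1 : c ≤ 1) (ht : c ≤ t) :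
    klFun t ≤ (t - 1) ^ 2 / (2 * c) := by
  set F : ℝ → ℝ := fun s => (s - 1) ^ 2 / (2 * c) - klFun s
  set F' : ℝ → ℝ := fun s => (s - 1) / c - log s
  have hF_cont : ContinuousOn F (Set.Ici c) :=
    (by fun_prop : Continuous fun t : ℝ => (t - 1) ^ 2 / (2 * c)).sub continuous_klFun
      |>.continuousOn
  have hF_deriv {x : ℝ} (hx : 0 < x) : HasDerivAt F (F' x) x := by
    refine (((((hasDerivAt_id' x).sub_const 1).pow 2).div_const (2 * c)).sub
      (hasDerivAt_klFun hx.ne')).congr_deriv ?_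
    simp only [F']
    field_simp
    ring
  suffices 0 ≤ F t by simpa [F] using this
  have hF_one : F 1 = 0 := by simp [F, klFun_one]
  rcases le_total 1 t with h1t | ht1
  · -- on `[1, ∞)`: `log x ≤ x - 1 ≤ (x - 1) / c`
    have hmono : MonotoneOn F (Set.Ici 1) := by
      refine monotoneOn_of_hasDerivWithinAt_nonneg (f' := F') (convex_Ici 1)
        (hF_cont.mono (Set.Ici_subset_Ici.2 hc1)) (fun x hx => ?_) fun x hx => ?_
      · rw [interior_Ici] at hx
        exact (hF_deriv (one_pos.trans hx)).hasDerivWithinAt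
      · rw [interior_Ici] at hx
        have hx0 : 0 < x := one_pos.trans hx
        have hslope : x - 1 ≤ (x - 1) / c := by
          rw [le_div_iff₀ hc0]
          nlinarith [Set.mem_Ioi.1 hx]
        linarith [log_le_sub_one_of_pos hx0]
    simpa [hF_one] using hmono Set.self_mem_Ici h1t h1t
  · -- on `[c, 1]`: `(x - 1) / c ≤ (x - 1) / x = 1 - x⁻¹ ≤ log x`
    have hanti : AntitoneOn F (Set.Icc c 1) := by
      refine antitoneOn_of_hasDerivWithinAt_nonpos (f' := F') (convex_Icc c 1)
        (hF_cont.mono Set.Icc_subset_Ici_self) (fun x hx => ?_) fun x hx => ?_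
      · rw [interior_Icc] at hx
        exact (hF_deriv (hc0.trans hx.1)).hasDerivWithinAt
      · rw [interior_Icc] at hx
        have hx0 : 0 < x := hc0.trans hx.1
        have hslope : (x - 1) / c ≤ (x - 1) / x := by
          rw [div_le_div_iff₀ hc0 hx0]
          nlinarith [hx.1, hx.2]
        have hinv : (x - 1) / x = 1 - x⁻¹ := by field_simp
        linarith [one_sub_inv_le_log_of_pos hx0]
    simpa [hF_one] using hanti ⟨ht, ht1⟩ ⟨hc1, le_rfl⟩ ht1

lemma mul_log_div_sub_add_le {c M P : ℝ} (hc0 : 0 < c) (hc1 : c ≤ 1) (hP : 0 < P)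
    (hM : c * P ≤ M) :
    M * log (M / P) - M + P ≤ (M - P) ^ 2 / (2 * c * P) := by
  have h := mul_le_mul_of_nonneg_left
    (klFun_le_sq_div hc0 hc1 ((le_div_iff₀ hP).2 hM)) hP.le
  calc M * log (M / P) - M + P = P * klFun (M / P) := by
        rw [klFun_apply]
        field_simp
        ring
    _ ≤ P * ((M / P - 1) ^ 2 / (2 * c)) := h
    _ = (M - P) ^ 2 / (2 * c * P) := by
        field_simp

lemma discreteKL_mixture_le {α : Type*} [Fintype α] {p q : α → ℝ}
    (hp : ∀ a, 0 < p a) (hpsum : ∑ a, p a = 1) (hq : ∀ a, 0 ≤ q a) (hqsum : ∑ a, q a = 1)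
    {η : ℝ} (hη0 : 0 ≤ η) (hη1 : η < 1) :
    discreteKL (mixture η p q) p ≤ η ^ 2 / (2 * (1 - η)) * discreteChiSq q p := by
  have hc0 : 0 < 1 - η := by linarith
  have hmix_ge (a : α) : (1 - η) * p a ≤ mixture η p q a :=
    le_add_of_nonneg_right (mul_nonneg hη0 (hq a))
  calc discreteKL (mixture η p q) p
      = ∑ a, (mixture η p q a * log (mixture η p q a / p a) - mixture η p q a + p a) := by
        rw [sum_add_distrib, sum_sub_distrib, sum_mixture hpsum hqsum, hpsum, discreteKL]
        ring
    _ ≤ ∑ a, (mixture η p q a - p a) ^ 2 / (2 * (1 - η) * p a) :=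
        sum_le_sum fun a _ =>
          mul_log_div_sub_add_le hc0 (by linarith) (hp a) (hmix_ge a)
    _ = η ^ 2 / (2 * (1 - η)) * discreteChiSq q p := by
        rw [discreteChiSq, mul_sum]
        refine sum_congr rfl fun a _ => ?_
        have hpa := (hp a).ne'
        simp only [mixture]
        field_simp
        ring

section Product

variable {ι : Type*} [Fintype ι] [DecidableEq ι] {α : ι → Type*} [∀ i, Fintype (α i)]

lemma sum_piProd_mul_eval {f : ∀ i, α i → ℝ} (i : ι) (hf : ∀ j ≠ i, ∑ a, f j a = 1)
    (g : α i → ℝ) :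
    ∑ x : ∀ j, α j, piProd f x * g (x i) = ∑ a, f i a * g a := by
  set f' : ∀ j, α j → ℝ := Function.update f i fun a => f i a * g a
  have hf' (x : ∀ j, α j) : piProd f x * g (x i) = ∏ j, f' j (x j) := by
    have hrest : ∏ j ∈ univ.erase i, f' j (x j) = ∏ j ∈ univ.erase i, f j (x j) :=
      prod_congr rfl fun j hj => by simp [f', Function.update_of_ne (ne_of_mem_erase hj)]
    rw [piProd, ← mul_prod_erase _ _ (mem_univ i), ← mul_prod_erase _ _ (mem_univ i), hrest]
    simp only [f', Function.update_self]
    ring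
  simp_rw [hf', ← Fintype.prod_sum f']
  rw [Fintype.prod_eq_single i fun j hj => by simpa [f', hj] using hf j hj]
  simp [f']

lemma discreteKL_piProd {r p : ∀ i, α i → ℝ} (hr : ∀ i, ∑ a, r i a = 1)
    (hp : ∀ i a, p i a ≠ 0) :
    discreteKL (piProd r) (piProd p) = ∑ i, discreteKL (r i) (p i) := by
  have hlog (x : ∀ i, α i) : piProd r x * log (piProd r x / piProd p x) =
      ∑ i, piProd r x * log (r i (x i) / p i (x i)) := by
    by_cases hx : piProd r x = 0
    · simp [hx]
    have hrx : ∀ i ∈ univ, r i (x i) ≠ 0 := prod_ne_zero_iff.1 hx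
    rw [← mul_sum, piProd, piProd, ← prod_div_distrib,
      log_prod fun i hi => div_ne_zero (hrx i hi) (hp i (x i))]
  simp_rw [discreteKL, hlog]
  rw [sum_comm]
  exact sum_congr rfl fun i _ =>
    sum_piProd_mul_eval i (fun j _ => hr j) fun a => log (r i a / p i a)

end Product

theorem kl_collapse_product_general (T : ℕ)
    (α : Fin T → Type*) [∀ i, Fintype (α i)]
    (p q : ∀ i, α i → ℝ)
    (hp : ∀ i, ∀ a, 0 < p i a) (hpsum : ∀ i, ∑ a, p i a = 1)
    (hq : ∀ i, ∀ a, 0 ≤ q i a) (hqsum : ∀ i, ∑ a, q i a = 1)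
    (hchi : ∀ i, ∑ a, (q i a - p i a) ^ 2 / p i a ≤ 1)
    (η : ℝ) (hη0 : 0 ≤ η) (hη1 : η ≤ 1 / 2) :
    (∑ x : (∀ i, α i),
        (∏ i, ((1 - η) * p i (x i) + η * q i (x i))) *
          Real.log ((∏ i, ((1 - η) * p i (x i) + η * q i (x i))) / ∏ i, p i (x i))
      = ∑ i, ∑ a, ((1 - η) * p i a + η * q i a) *
          Real.log (((1 - η) * p i a + η * q i a) / p i a)) ∧
    (∑ x : (∀ i, α i),
        (∏ i, ((1 - η) * p i (x i) + η * q i (x i))) *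
          Real.log ((∏ i, ((1 - η) * p i (x i) + η * q i (x i))) / ∏ i, p i (x i))
      ≤ T * η ^ 2 / (2 * (1 - η))) := by
  have hc0 : 0 < 1 - η := by linarith
  set m : ∀ i, α i → ℝ := fun i => mixture η (p i) (q i)
  have htensor : discreteKL (piProd m) (piProd p) = ∑ i, discreteKL (m i) (p i) :=
    discreteKL_piProd (fun i => sum_mixture (hpsum i) (hqsum i) η) fun i a => (hp i a).ne'
  refine ⟨htensor, ?_⟩
  calc discreteKL (piProd m) (piProd p) = ∑ i, discreteKL (m i) (p i) := htensor
    _ ≤ ∑ _i : Fin T, η ^ 2 / (2 * (1 - η)) := sum_le_sum fun i _ =>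
        (discreteKL_mixture_le (hp i) (hpsum i) (hq i) (hqsum i) hη0 (by linarith)).trans
          (mul_le_of_le_one_right (by positivity) (hchi i))
    _ = T * η ^ 2 / (2 * (1 - η)) := by
        rw [sum_const, card_univ, Fintype.card_fin, nsmul_eq_mul, mul_div_assoc]

/-- T-token KL collapse: for `T` coordinates, each a mixture
`m_i = (1−η)p_i + ηq_i` with `χ²(q_i‖p_i) ≤ 1` and `0 ≤ η ≤ 1/2`, the KL
divergence between the product distributions tensorizes,
`KL(⊗ m_i ‖ ⊗ p_i) = ∑ i KL(m_i‖p_i)`, and is at most `T·η²/(2(1−η))`. -/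
theorem kl_collapse_product (T : ℕ) (hT : 0 < T)
    (α : Fin T → Type*) [∀ i, Fintype (α i)] [∀ i, Nonempty (α i)]
    (p q : ∀ i, α i → ℝ)
    (hp : ∀ i, ∀ a, 0 < p i a) (hpsum : ∀ i, ∑ a, p i a = 1)
    (hq : ∀ i, ∀ a, 0 ≤ q i a) (hqsum : ∀ i, ∑ a, q i a = 1)
    (hchi : ∀ i, ∑ a, (q i a - p i a) ^ 2 / p i a ≤ 1)
    (η : ℝ) (hη0 : 0 ≤ η) (hη1 : η ≤ 1 / 2) :
    (∑ x : (∀ i, α i),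
        (∏ i, ((1 - η) * p i (x i) + η * q i (x i))) *
          Real.log ((∏ i, ((1 - η) * p i (x i) + η * q i (x i))) / ∏ i, p i (x i))
      = ∑ i, ∑ a, ((1 - η) * p i a + η * q i a) *
          Real.log (((1 - η) * p i a + η * q i a) / p i a)) ∧
    (∑ x : (∀ i, α i),
        (∏ i, ((1 - η) * p i (x i) + η * q i (x i))) *
          Real.log ((∏ i, ((1 - η) * p i (x i) + η * q i (x i))) / ∏ i, p i (x i))
      ≤ T * η ^ 2 / (2 * (1 - η))) :=
  kl_collapse_product_general T α p q hp hpsum hq hqsum hchi η hη0 hη1
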